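/- Let a_1, …, a_K ∈ ℝ^n and b_1, …, b_L ∈ ℝ^n, and let α_1, …, α_K, β_1, …, β_L ≥ 0 satisfy ∑ α_i = 1, ∑ α_i a_i = 0, ∑ β_j = 1, ∑ β_j b_j = 0. Suppose μ > 0 is such that ‖a_i − b_j‖_4^4 ≥ μ^4 for all i ∈ [K], j ∈ [L]. Then ∑_{m=1}^n ∑_{i=1}^K α_i a_{i,m}^4 + ∑_{m=1}^n ∑_{j=1}^L β_j b_{j,m}^4 ≥ μ^4 − 6·∑_{m=1}^n (∑_{i=1}^K α_i a_{i,m}^2)(∑_{j=1}^L β_j b_{j,m}^2), where a_{i,m} and b_{j,m} denote m-th coordinates. -/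
import Mathlib


open Finset

/-- **Inequality (7) from the proof.** With barycentric weights `α` on the `aᵢ` and `β`
on the `bⱼ` (both with barycenter the origin), if `‖aᵢ - bⱼ‖₄⁴ ≥ μ⁴` for all `i, j`,
then `∑_m ∑_i αᵢ a_{i,m}⁴ + ∑_m ∑_j βⱼ b_{j,m}⁴ ≥ μ⁴ - 6·∑_m (∑_i αᵢ a_{i,m}²)(∑_j βⱼ b_{j,m}²)`. -/
theorem stmt11 (n K L : ℕ) (a : Fin K → Fin n → ℝ) (b : Fin L → Fin n → ℝ)
    (α : Fin K → ℝ) (β : Fin L → ℝ)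
    (hα : ∀ i, 0 ≤ α i) (hβ : ∀ j, 0 ≤ β j)
    (hαsum : ∑ i, α i = 1) (hαbary : ∑ i, α i • a i = 0)
    (hβsum : ∑ j, β j = 1) (hβbary : ∑ j, β j • b j = 0)
    (μ : ℝ) (hμ : 0 < μ)
    (hdist : ∀ i j, μ ^ 4 ≤ ∑ m, (a i m - b j m) ^ 4) :
    μ ^ 4 - 6 * (∑ m, (∑ i, α i * (a i m) ^ 2) * (∑ j, β j * (b j m) ^ 2)) ≤
      (∑ m, ∑ i, α i * (a i m) ^ 4) + ∑ m, ∑ j, β j * (b j m) ^ 4 := by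
  have ha : ∀ m, (∑ i, α i * a i m) = 0 := by
    intro m
    have := congrFun hαbary m
    simpa [Finset.sum_apply] using this
  have hb : ∀ m, (∑ j, β j * b j m) = 0 := by
    intro m
    have := congrFun hβbary m
    simpa [Finset.sum_apply] using this
  -- Key coordinatewise identity for the averaged fourth power
  have key : ∀ m, (∑ i, ∑ j, α i * β j * (a i m - b j m) ^ 4)
      = (∑ i, α i * (a i m) ^ 4) + (∑ j, β j * (b j m) ^ 4)
        + 6 * (∑ i, α i * (a i m) ^ 2) * (∑ j, β j * (b j m) ^ 2) := by
    intro m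
    have step1 : (∑ i, ∑ j, α i * β j * (a i m - b j m) ^ 4)
        = ∑ i, (α i * (a i m) ^ 4 * (∑ j, β j)
            + α i * (∑ j, β j * (b j m) ^ 4)
            + 6 * (α i * (a i m) ^ 2) * (∑ j, β j * (b j m) ^ 2)
            - 4 * (α i * (a i m) ^ 3) * (∑ j, β j * b j m)
            - 4 * (α i * a i m) * (∑ j, β j * (b j m) ^ 3)) := by
      refine Finset.sum_congr rfl fun i _ => ?_
      simp only [Finset.mul_sum, ← Finset.sum_add_distrib, ← Finset.sum_sub_distrib]
      exact Finset.sum_congr rfl fun j _ => by ring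
    rw [step1, hβsum, hb m]
    simp only [mul_one, mul_zero, sub_zero, zero_mul]
    simp only [Finset.sum_sub_distrib, Finset.sum_add_distrib, ← Finset.sum_mul,
      ← Finset.mul_sum, hαsum, ha m]
    ring
  -- Average the distance hypothesis
  have havg : μ ^ 4 ≤ ∑ i, ∑ j, α i * β j * (∑ m, (a i m - b j m) ^ 4) := by
    have : μ ^ 4 = ∑ i, ∑ j, α i * β j * μ ^ 4 := by
      simp only [← Finset.sum_mul, ← Finset.mul_sum]
      rw [hαsum, hβsum]; ring
    rw [this]
    refine Finset.sum_le_sum fun i _ => Finset.sum_le_sum fun j _ => ?_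
    exact mul_le_mul_of_nonneg_left (hdist i j) (mul_nonneg (hα i) (hβ j))
  -- Swap summation order
  have hswap : (∑ i, ∑ j, α i * β j * (∑ m, (a i m - b j m) ^ 4))
      = ∑ m, ∑ i, ∑ j, α i * β j * (a i m - b j m) ^ 4 := by
    calc (∑ i, ∑ j, α i * β j * (∑ m, (a i m - b j m) ^ 4))
        = ∑ i, ∑ j, ∑ m, α i * β j * (a i m - b j m) ^ 4 := by
          simp only [Finset.mul_sum]
      _ = ∑ i, ∑ m, ∑ j, α i * β j * (a i m - b j m) ^ 4 :=
          Finset.sum_congr rfl fun i _ => Finset.sum_comm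
      _ = ∑ m, ∑ i, ∑ j, α i * β j * (a i m - b j m) ^ 4 := Finset.sum_comm
  rw [hswap] at havg
  have hsum : (∑ m, ∑ i, ∑ j, α i * β j * (a i m - b j m) ^ 4)
      = (∑ m, ∑ i, α i * (a i m) ^ 4) + (∑ m, ∑ j, β j * (b j m) ^ 4)
        + 6 * ∑ m, (∑ i, α i * (a i m) ^ 2) * (∑ j, β j * (b j m) ^ 2) := by
    rw [Finset.mul_sum, ← Finset.sum_add_distrib, ← Finset.sum_add_distrib]
    refine Finset.sum_congr rfl fun m _ => ?_
    rw [key m]; ring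
  rw [hsum] at havg
  linarith
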